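/- arXiv:math/0207172 — 4 statements merged into one kernel-verified Lean document; each statement's English description precedes it below -/
import Mathlib

section
/- Let Π₁ and Π₂ be idempotent maps on a Euclidean space E, let γ₁, γ₂ be real parameters, define fᵢ(ρ) = (1+γᵢ)Πᵢ(ρ) − γᵢρ, and define the difference map D(ρ) = ρ + β(Π₁(f₂(ρ)) − Π₂(f₁(ρ))) with β ≠ 0. If ρ* is a fixed point of D, then the common value ρˢᵒˡ := Π₁(f₂(ρ*)) = Π₂(f₁(ρ*)) satisfies Π₁(ρˢᵒˡ) = ρˢᵒˡ and Π₂(ρˢᵒˡ) = ρˢᵒˡ, provided γ₁γ₂ ≠ −1. -/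
/-- fixed points of the difference map yield solutions satisfying
both constraints. -/
theorem stmt_0
    {E : Type*} [NormedAddCommGroup E] [InnerProductSpace ℝ E] [FiniteDimensional ℝ E]
    (P₁ P₂ : E → E)
    (hP₁ : ∀ ρ, P₁ (P₁ ρ) = P₁ ρ) (hP₂ : ∀ ρ, P₂ (P₂ ρ) = P₂ ρ)
    (β γ₁ γ₂ : ℝ) (hβ : β ≠ 0) (hγ : γ₁ * γ₂ ≠ -1)
    (f₁ f₂ : E → E)
    (hf₁ : ∀ ρ, f₁ ρ = (1 + γ₁) • P₁ ρ - γ₁ • ρ)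
    (hf₂ : ∀ ρ, f₂ ρ = (1 + γ₂) • P₂ ρ - γ₂ • ρ)
    (D : E → E)
    (hD : ∀ ρ, D ρ = ρ + β • (P₁ (f₂ ρ) - P₂ (f₁ ρ)))
    (ρstar : E) (hfix : D ρstar = ρstar)
    (ρsol : E) (hsol : ρsol = P₁ (f₂ ρstar)) :
    ρsol = P₂ (f₁ ρstar) ∧ P₁ ρsol = ρsol ∧ P₂ ρsol = ρsol := by
  have h := hfix
  rw [hD] at h
  have h0 : β • (P₁ (f₂ ρstar) - P₂ (f₁ ρstar)) = 0 := by
    have := congrArg (· - ρstar) h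
    simpa using this
  have heq : P₁ (f₂ ρstar) = P₂ (f₁ ρstar) := by
    rcases smul_eq_zero.mp h0 with hb | hs
    · exact absurd hb hβ
    · exact sub_eq_zero.mp hs
  refine ⟨hsol.trans heq, ?_, ?_⟩
  · rw [hsol, hP₁]
  · rw [hsol, heq, hP₂]
end

section
/- Let π₁, π₂ be orthogonal projections on an N-dimensional real inner product space satisfying πᵢπ⊥ = π⊥πᵢ = πᵢ, where π⊥ projects onto (ker π₁ ∩ ker π₂)^⊥, and suppose range π₁ ∩ range π₂ = {0}. Define d = id + β((1+γ₂)π₁π₂ − γ₂π₁ − (1+γ₁)π₂π₁ + γ₁π₂), d⊥ = π⊥ d π⊥, and normalized traces t₁ = Tr(π₁)/N, t₂ = Tr(π₂)/N, t⊥ = Tr(π⊥)/N, t₁₂ = Tr(π₁π₂)/N, t₁₂₁₂ = Tr(π₁π₂π₁π₂)/N. Then (1/N)·Tr(d⊥ᵀ d⊥) = t⊥ + 2β[γ₁t₂ − γ₂t₁ + (γ₂−γ₁)t₁₂] + β²[γ₁²t₂ + γ₂²t₁ + (2 + 2(γ₁+γ₂) − (γ₁−γ₂)²)t₁₂ − 2(1+γ₁)(1+γ₂)t₁₂₁₂].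 -/
/-!
Compressing by `π⊥` does nothing to the β-part of `d`, because `π⊥` acts as the identity on the
ranges of `π₁` and `π₂`; hence `d⊥ = π⊥ + β X` with `X = (1+γ₂)π₁π₂ − γ₂π₁ − (1+γ₁)π₂π₁ + γ₁π₂`.
Expanding `Tr((π⊥ + β X)ᵀ(π⊥ + β X))` and reducing every word in `π₁, π₂` with idempotency,
self-adjointness and cyclicity of the trace leaves only `Tr π₁`, `Tr π₂`, `Tr π⊥`, `Tr π₁π₂`
and `Tr π₁π₂π₁π₂`. Nothing about the trace beyond cyclicity enters, so the identity holds for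
any tracial linear functional on a real star algebra.
-/

section LinDiff

variable {A : Type*} [Ring A] [Algebra ℝ A]

/-- `d = 1 + β • linDiff γ₁ γ₂ π₁ π₂` is the linearisation of the difference map. -/
def linDiff (γ₁ γ₂ : ℝ) (p q : A) : A :=
  (1 + γ₂) • (p * q) - γ₂ • p - (1 + γ₁) • (q * p) + γ₁ • q

variable {γ₁ γ₂ : ℝ} {p q r : A} (τ : A →ₗ[ℝ] ℝ)

lemma linDiff_mul_of_mul_eq (hp : p * r = p) (hq : q * r = q) :
    linDiff γ₁ γ₂ p q * r = linDiff γ₁ γ₂ p q := by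
  simp only [linDiff, add_mul, sub_mul, smul_mul_assoc, mul_assoc, hp, hq]

lemma mul_linDiff_of_mul_eq (hp : r * p = p) (hq : r * q = q) :
    r * linDiff γ₁ γ₂ p q = linDiff γ₁ γ₂ p q := by
  simp only [linDiff, mul_add, mul_sub, mul_smul_comm, ← mul_assoc, hp, hq]

lemma mul_one_add_smul_linDiff_mul (β : ℝ) (hr : IsIdempotentElem r)
    (hpr : p * r = p) (hrp : r * p = p) (hqr : q * r = q) (hrq : r * q = q) :
    r * (1 + β • linDiff γ₁ γ₂ p q) * r = r + β • linDiff γ₁ γ₂ p q := by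
  rw [mul_add, mul_one, add_mul, hr.eq, mul_smul_comm, smul_mul_assoc,
    mul_linDiff_of_mul_eq hrp hrq, linDiff_mul_of_mul_eq hpr hqr]

lemma trace_linDiff (hτ : ∀ a b : A, τ (a * b) = τ (b * a)) :
    τ (linDiff γ₁ γ₂ p q) = γ₁ * τ q - γ₂ * τ p + (γ₂ - γ₁) * τ (p * q) := by
  simp only [linDiff, map_add, map_sub, map_smul, smul_eq_mul, hτ q p]
  ring

variable [StarRing A] [StarModule ℝ A]

lemma star_linDiff (hp : IsSelfAdjoint p) (hq : IsSelfAdjoint q) :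
    star (linDiff γ₁ γ₂ p q) =
      (1 + γ₂) • (q * p) - γ₂ • p - (1 + γ₁) • (p * q) + γ₁ • q := by
  simp only [linDiff, star_add, star_sub, star_smul, star_mul, hp.star_eq, hq.star_eq,
    star_trivial]

lemma trace_star_linDiff (hτ : ∀ a b : A, τ (a * b) = τ (b * a))
    (hp : IsSelfAdjoint p) (hq : IsSelfAdjoint q) :
    τ (star (linDiff γ₁ γ₂ p q)) = γ₁ * τ q - γ₂ * τ p + (γ₂ - γ₁) * τ (p * q) := by
  simp only [star_linDiff hp hq, map_add, map_sub, map_smul, smul_eq_mul, hτ q p]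
  ring

lemma trace_star_linDiff_mul_linDiff (hτ : ∀ a b : A, τ (a * b) = τ (b * a))
    (hp : IsStarProjection p) (hq : IsStarProjection q) :
    τ (star (linDiff γ₁ γ₂ p q) * linDiff γ₁ γ₂ p q) =
      γ₁ ^ 2 * τ q + γ₂ ^ 2 * τ p + (2 + 2 * (γ₁ + γ₂) - (γ₁ - γ₂) ^ 2) * τ (p * q) -
        2 * (1 + γ₁) * (1 + γ₂) * τ (p * (q * (p * q))) := by
  have hpp (x : A) : p * (p * x) = p * x := by rw [← mul_assoc, hp.isIdempotentElem.eq]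
  have hqq (x : A) : q * (q * x) = q * x := by rw [← mul_assoc, hq.isIdempotentElem.eq]
  have hqp : τ (q * p) = τ (p * q) := hτ q p
  have hpqp : τ (p * (q * p)) = τ (p * q) := by rw [hτ, mul_assoc, hp.isIdempotentElem.eq, hqp]
  have hqpq : τ (q * (p * q)) = τ (p * q) := by rw [hτ, mul_assoc, hq.isIdempotentElem.eq]
  have hqpqp : τ (q * (p * (q * p))) = τ (p * (q * (p * q))) := by
    rw [hτ]; simp only [mul_assoc]
  rw [star_linDiff hp.isSelfAdjoint hq.isSelfAdjoint]
  simp only [linDiff, mul_add, add_mul, mul_sub, sub_mul, smul_mul_assoc, mul_smul_comm,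
    mul_assoc, hp.isIdempotentElem.eq, hq.isIdempotentElem.eq, hpp, hqq, map_add, map_sub,
    map_smul, smul_eq_mul, hqp, hpqp, hqpq, hqpqp]
  ring

theorem trace_star_mul_self_add_smul_linDiff (β : ℝ) (hτ : ∀ a b : A, τ (a * b) = τ (b * a))
    (hp : IsStarProjection p) (hq : IsStarProjection q) (hr : IsStarProjection r)
    (hrp : r * p = p) (hrq : r * q = q) :
    τ (star (r + β • linDiff γ₁ γ₂ p q) * (r + β • linDiff γ₁ γ₂ p q)) =
      τ r + 2 * β * (γ₁ * τ q - γ₂ * τ p + (γ₂ - γ₁) * τ (p * q)) +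
        β ^ 2 * (γ₁ ^ 2 * τ q + γ₂ ^ 2 * τ p +
          (2 + 2 * (γ₁ + γ₂) - (γ₁ - γ₂) ^ 2) * τ (p * q) -
          2 * (1 + γ₁) * (1 + γ₂) * τ (p * (q * (p * q)))) := by
  have hrX : r * linDiff γ₁ γ₂ p q = linDiff γ₁ γ₂ p q := mul_linDiff_of_mul_eq hrp hrq
  have hXr : star (linDiff γ₁ γ₂ p q) * r = star (linDiff γ₁ γ₂ p q) := by
    simpa only [star_mul, hr.isSelfAdjoint.star_eq] using congrArg star hrX
  rw [star_add, hr.isSelfAdjoint.star_eq, star_smul, star_trivial]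
  simp only [add_mul, mul_add, smul_mul_assoc, mul_smul_comm, hr.isIdempotentElem.eq,
    hrX, hXr, map_add, map_smul, smul_eq_mul]
  rw [trace_linDiff τ hτ, trace_star_linDiff τ hτ hp.isSelfAdjoint hq.isSelfAdjoint,
    trace_star_linDiff_mul_linDiff τ hτ hp hq]
  ring

end LinDiff

theorem stmt_7_general
    {V : Type*} [NormedAddCommGroup V] [InnerProductSpace ℝ V] [FiniteDimensional ℝ V]
    (N : ℕ)
    (π₁ π₂ : V →ₗ[ℝ] V)
    (h₁s : π₁.IsSymmetric) (h₂s : π₂.IsSymmetric)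
    (h₁i : π₁ ∘ₗ π₁ = π₁) (h₂i : π₂ ∘ₗ π₂ = π₂)
    (K : Submodule ℝ V)
    (πp : V →ₗ[ℝ] V)
    (hπp : πp = K.subtype ∘ₗ (K.orthogonalProjectionOnto : V →L[ℝ] K).toLinearMap)
    (hperp₁ : π₁ ∘ₗ πp = π₁) (hperp₁' : πp ∘ₗ π₁ = π₁)
    (hperp₂ : π₂ ∘ₗ πp = π₂) (hperp₂' : πp ∘ₗ π₂ = π₂)
    (β γ₁ γ₂ : ℝ)
    (d : V →ₗ[ℝ] V)
    (hd : d = LinearMap.id +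
      β • ((1 + γ₂) • (π₁ ∘ₗ π₂) - γ₂ • π₁ - (1 + γ₁) • (π₂ ∘ₗ π₁) + γ₁ • π₂))
    (dp : V →ₗ[ℝ] V) (hdp : dp = πp ∘ₗ d ∘ₗ πp)
    (t₁ t₂ tp t₁₂ t₁₂₁₂ : ℝ)
    (ht₁ : t₁ = LinearMap.trace ℝ V π₁ / N)
    (ht₂ : t₂ = LinearMap.trace ℝ V π₂ / N)
    (htp : tp = LinearMap.trace ℝ V πp / N)
    (ht₁₂ : t₁₂ = LinearMap.trace ℝ V (π₁ ∘ₗ π₂) / N)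
    (ht₁₂₁₂ : t₁₂₁₂ = LinearMap.trace ℝ V (π₁ ∘ₗ π₂ ∘ₗ π₁ ∘ₗ π₂) / N) :
    LinearMap.trace ℝ V (LinearMap.adjoint dp ∘ₗ dp) / N =
      tp + 2 * β * (γ₁ * t₂ - γ₂ * t₁ + (γ₂ - γ₁) * t₁₂) +
        β ^ 2 * (γ₁ ^ 2 * t₂ + γ₂ ^ 2 * t₁ +
          (2 + 2 * (γ₁ + γ₂) - (γ₁ - γ₂) ^ 2) * t₁₂ -
          2 * (1 + γ₁) * (1 + γ₂) * t₁₂₁₂) := by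
  have hp : IsStarProjection π₁ :=
    LinearMap.isStarProjection_iff_isSymmetricProjection.mpr ⟨h₁i, h₁s⟩
  have hq : IsStarProjection π₂ :=
    LinearMap.isStarProjection_iff_isSymmetricProjection.mpr ⟨h₂i, h₂s⟩
  have hr : IsStarProjection πp := hπp ▸
    LinearMap.isStarProjection_iff_isSymmetricProjection.mpr K.isSymmetricProjection_starProjection
  have hdp' : dp = πp + β • linDiff γ₁ γ₂ π₁ π₂ :=
    calc dp = πp * (1 + β • linDiff γ₁ γ₂ π₁ π₂) * πp := by rw [hdp, hd, mul_assoc]; rfl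
      _ = πp + β • linDiff γ₁ γ₂ π₁ π₂ :=
        mul_one_add_smul_linDiff_mul β hr.isIdempotentElem hperp₁ hperp₁' hperp₂ hperp₂'
  rw [← LinearMap.star_eq_adjoint, ← Module.End.mul_eq_comp, hdp',
    trace_star_mul_self_add_smul_linDiff _ β (LinearMap.trace_mul_comm ℝ) hp hq hr hperp₁' hperp₂']
  simp only [← Module.End.mul_eq_comp] at ht₁₂ ht₁₂₁₂
  subst ht₁ ht₂ htp ht₁₂ ht₁₂₁₂
  ring

/-- the Frobenius-norm formula (1/N)Tr(d⊥ᵀ d⊥) for the linearized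
difference map. -/
theorem stmt_7
    {V : Type*} [NormedAddCommGroup V] [InnerProductSpace ℝ V] [FiniteDimensional ℝ V]
    (N : ℕ) (hN : Module.finrank ℝ V = N) (hNpos : 0 < N)
    (π₁ π₂ : V →ₗ[ℝ] V)
    (h₁s : π₁.IsSymmetric) (h₂s : π₂.IsSymmetric)
    (h₁i : π₁ ∘ₗ π₁ = π₁) (h₂i : π₂ ∘ₗ π₂ = π₂)
    (hrange : LinearMap.range π₁ ⊓ LinearMap.range π₂ = ⊥)
    (K : Submodule ℝ V) (hK : K = (LinearMap.ker π₁ ⊓ LinearMap.ker π₂)ᗮ)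
    (πp : V →ₗ[ℝ] V)
    (hπp : πp = K.subtype ∘ₗ (K.orthogonalProjectionOnto : V →L[ℝ] K).toLinearMap)
    (hperp₁ : π₁ ∘ₗ πp = π₁) (hperp₁' : πp ∘ₗ π₁ = π₁)
    (hperp₂ : π₂ ∘ₗ πp = π₂) (hperp₂' : πp ∘ₗ π₂ = π₂)
    (β γ₁ γ₂ : ℝ)
    (d : V →ₗ[ℝ] V)
    (hd : d = LinearMap.id +
      β • ((1 + γ₂) • (π₁ ∘ₗ π₂) - γ₂ • π₁ - (1 + γ₁) • (π₂ ∘ₗ π₁) + γ₁ • π₂))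
    (dp : V →ₗ[ℝ] V) (hdp : dp = πp ∘ₗ d ∘ₗ πp)
    (t₁ t₂ tp t₁₂ t₁₂₁₂ : ℝ)
    (ht₁ : t₁ = LinearMap.trace ℝ V π₁ / N)
    (ht₂ : t₂ = LinearMap.trace ℝ V π₂ / N)
    (htp : tp = LinearMap.trace ℝ V πp / N)
    (ht₁₂ : t₁₂ = LinearMap.trace ℝ V (π₁ ∘ₗ π₂) / N)
    (ht₁₂₁₂ : t₁₂₁₂ = LinearMap.trace ℝ V (π₁ ∘ₗ π₂ ∘ₗ π₁ ∘ₗ π₂) / N) :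
    LinearMap.trace ℝ V (LinearMap.adjoint dp ∘ₗ dp) / N =
      tp + 2 * β * (γ₁ * t₂ - γ₂ * t₁ + (γ₂ - γ₁) * t₁₂) +
        β ^ 2 * (γ₁ ^ 2 * t₂ + γ₂ ^ 2 * t₁ +
          (2 + 2 * (γ₁ + γ₂) - (γ₁ - γ₂) ^ 2) * t₁₂ -
          2 * (1 + γ₁) * (1 + γ₂) * t₁₂₁₂) :=
  stmt_7_general N π₁ π₂ h₁s h₂s h₁i h₂i K πp hπp hperp₁ hperp₁' hperp₂ hperp₂' β γ₁ γ₂ d hd dp hdp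
    t₁ t₂ tp t₁₂ t₁₂₁₂ ht₁ ht₂ htp ht₁₂ ht₁₂₁₂
end

section
/- Let U be an N×N complex unitary matrix and let V = Uᵀ U. Then the 2N×2N real block matrix π = ½[[I + Re V, Im V], [Im V, I − Re V]] is symmetric and idempotent, i.e., an orthogonal projection on ℝ^{2N}, of trace N. -/
open Matrix
/-- the 2N×2N real block matrix ½[[I+ReV, ImV],[ImV, I−ReV]],
V = Uᵀ U with U unitary, is an orthogonal projection of trace N. -/
theorem stmt_15
    (N : ℕ) (U : Matrix (Fin N) (Fin N) ℂ)
    (hU : U ∈ Matrix.unitaryGroup (Fin N) ℂ)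
    (V : Matrix (Fin N) (Fin N) ℂ) (hV : V = Uᵀ * U)
    (P : Matrix (Fin N ⊕ Fin N) (Fin N ⊕ Fin N) ℝ)
    (hP : P = (1 / 2 : ℝ) • Matrix.fromBlocks
      (1 + V.map Complex.re) (V.map Complex.im)
      (V.map Complex.im) (1 - V.map Complex.re)) :
    P.IsSymm ∧ P * P = P ∧ P.trace = (N : ℝ) := by
  set A := V.map Complex.re with hA
  set B := V.map Complex.im with hB
  -- V is symmetric
  have hVsym : Vᵀ = V := by rw [hV, transpose_mul, transpose_transpose]
  -- V * conj V = 1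
  have hprod : V * V.map (starRingEnd ℂ) = 1 := by
    have h1 : Uᴴ * U = 1 := (Matrix.mem_unitaryGroup_iff'.mp hU)
    have h2 : U * Uᴴ = 1 := (Matrix.mem_unitaryGroup_iff.mp hU)
    have hmap : V.map (starRingEnd ℂ) = Vᴴ := by
      conv_rhs => rw [← hVsym]
      ext i j
      simp [conjTranspose_apply]
    have htc : Uᵀᴴ = Uᴴᵀ := by ext i j; simp [conjTranspose_apply]
    rw [hmap, hV, conjTranspose_mul, htc]
    calc Uᵀ * U * (Uᴴ * Uᴴᵀ) = Uᵀ * (U * Uᴴ) * Uᴴᵀ := by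
          simp [Matrix.mul_assoc]
      _ = Uᵀ * Uᴴᵀ := by rw [h2, Matrix.mul_one]
      _ = (Uᴴ * U)ᵀ := by rw [transpose_mul]
      _ = 1 := by rw [h1, transpose_one]
  -- real and imaginary part relations
  have hAA : A * A + B * B = 1 := by
    ext i j
    have h := congrArg Complex.re (Matrix.ext_iff.mpr hprod i j)
    simp only [Matrix.mul_apply, Matrix.map_apply, Complex.re_sum, Complex.mul_re,
      Matrix.one_apply, apply_ite Complex.re, Complex.one_re, Complex.zero_re] at h
    simp only [hA, hB, Matrix.add_apply, Matrix.mul_apply, Matrix.map_apply, Matrix.one_apply,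
      ← Finset.sum_add_distrib]
    rw [← h]
    congr 1; ext k
    simp [Complex.conj_re, Complex.conj_im]
  have hcomm : B * A = A * B := by
    ext i j
    have h := congrArg Complex.im (Matrix.ext_iff.mpr hprod i j)
    simp only [Matrix.mul_apply, Matrix.map_apply, Complex.im_sum, Complex.mul_im,
      Matrix.one_apply, apply_ite Complex.im, Complex.one_im, Complex.zero_im, ite_self] at h
    simp only [hA, hB, Matrix.mul_apply, Matrix.map_apply]
    have h' : ∑ k, ((V i k).im * (V k j).re - (V i k).re * (V k j).im) = 0 := by
      rw [← h]; congr 1; ext k; simp only [Complex.conj_re, Complex.conj_im]; ring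
    rw [Finset.sum_sub_distrib] at h'
    linarith [h']
  -- symmetry of the real blocks
  have hAsym : Aᵀ = A := by rw [hA, ← transpose_map, hVsym]
  have hBsym : Bᵀ = B := by rw [hB, ← transpose_map, hVsym]
  refine ⟨?_, ?_, ?_⟩
  · -- P symmetric
    rw [Matrix.IsSymm, hP, transpose_smul, fromBlocks_transpose, transpose_add,
      transpose_sub, transpose_one, hAsym, hBsym]
  · -- idempotent
    have key : (Matrix.fromBlocks (1 + A) B B (1 - A)) *
        (Matrix.fromBlocks (1 + A) B B (1 - A)) =
        (2 : ℝ) • Matrix.fromBlocks (1 + A) B B (1 - A) := by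
      rw [Matrix.fromBlocks_multiply, Matrix.fromBlocks_smul]
      rw [Matrix.fromBlocks_inj]
      refine ⟨?_, ?_, ?_, ?_⟩
      · have e1 : (1 + A) * (1 + A) = 1 + A + A + A * A := by noncomm_ring
        rw [e1, two_smul]
        calc 1 + A + A + A * A + B * B = 1 + A + A + (A * A + B * B) := by abel
          _ = 1 + A + A + 1 := by rw [hAA]
          _ = 1 + A + (1 + A) := by abel
      · have e1 : (1 + A) * B = B + A * B := by noncomm_ring
        have e2 : B * (1 - A) = B - B * A := by noncomm_ring
        rw [e1, e2, hcomm, two_smul]; abel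
      · have e1 : B * (1 + A) = B + B * A := by noncomm_ring
        have e2 : (1 - A) * B = B - A * B := by noncomm_ring
        rw [e1, e2, hcomm, two_smul]; abel
      · have e1 : (1 - A) * (1 - A) = 1 - A - A + A * A := by noncomm_ring
        rw [e1, two_smul]
        calc B * B + (1 - A - A + A * A) = (A * A + B * B) + 1 - A - A := by abel
          _ = 1 + 1 - A - A := by rw [hAA]
          _ = 1 - A + (1 - A) := by abel
    rw [hP, smul_mul_smul_comm, key, smul_smul]
    norm_num
  · -- trace
    rw [hP, Matrix.trace_smul]
    have ht : (Matrix.fromBlocks (1 + A) B B (1 - A)).trace = 2 * (N : ℝ) := by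
      simp [Matrix.trace, Matrix.diag, Fintype.sum_sum_type, Matrix.add_apply,
        Matrix.sub_apply, Matrix.one_apply_eq, Finset.sum_add_distrib, Finset.sum_sub_distrib]
      ring
    rw [ht, smul_eq_mul]
    ring
end

section
/- Under Haar measure on the orthogonal group O(N) (N > 1), the average of the product of two matrix entries is E[O_{ip} O_{jq}] = δ_{ij} δ_{pq} / N. -/
/-! Multiplying by the reflection `diag(1, …, -1, …, 1)` on the left (resp. right) preserves
the Haar measure and negates `O i p * O j q` whenever `i ≠ j` (resp. `p ≠ q`), so those moments
vanish. Right invariance holds because a right translate of a Haar probability measure is again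
one, and such a measure is unique.
Right multiplication by a transposition permutes columns, so the second moments `E[O i p ^ 2]`
do not depend on `p`, and they sum to `1` because the rows of `O` are unit vectors. -/

open MeasureTheory Matrix

theorem MeasureTheory.Measure.IsHaarMeasure.isMulRightInvariant_of_isProbabilityMeasure
    {G : Type*} [Group G] [TopologicalSpace G] [IsTopologicalGroup G] [LocallyCompactSpace G]
    [MeasurableSpace G] [BorelSpace G] (μ : Measure G) [μ.IsHaarMeasure] [IsProbabilityMeasure μ] :
    μ.IsMulRightInvariant where
  map_mul_right_eq_self g := by
    have : IsProbabilityMeasure (μ.map (· * g)) :=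
      isProbabilityMeasure_map (continuous_mul_const g).aemeasurable
    exact Measure.isHaarMeasure_eq_of_isProbabilityMeasure _ _

namespace Matrix

variable {n : Type*} [Fintype n] [DecidableEq n]

instance {𝕜 : Type*} [RCLike 𝕜] : CompactSpace (unitaryGroup n 𝕜) := by
  have hclosed : IsClosed (unitaryGroup n 𝕜 : Set (Matrix n n 𝕜)) := isClosed_unitary
  open scoped Matrix.Norms.Elementwise in
  refine isCompact_iff_compactSpace.mp <|
    (isCompact_closedBall (0 : Matrix n n 𝕜) 1).of_isClosed_subset hclosed fun U hU => ?_
  rw [mem_closedBall_zero_iff]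
  exact entrywise_sup_norm_bound_of_unitary hU

namespace orthogonalGroup

variable {R : Type*} [CommRing R]

def coordReflection (k : n) : orthogonalGroup n R :=
  ⟨diagonal (Pi.mulSingle k (-1 : R)), by
    rw [mem_orthogonalGroup_iff, diagonal_transpose, diagonal_mul_diagonal]
    change diagonal ((Pi.mulSingle k (-1) : n → R) * Pi.mulSingle k (-1)) = 1
    rw [← Pi.mulSingle_mul, neg_one_mul, neg_neg, Pi.mulSingle_one]
    exact diagonal_one⟩

def ofPerm (σ : Equiv.Perm n) : orthogonalGroup n R :=
  ⟨σ.permMatrix R, by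
    rw [mem_orthogonalGroup_iff, transpose_permMatrix, ← permMatrix_mul, inv_mul_cancel,
      permMatrix_one]⟩

lemma coordReflection_mul_apply (k : n) (O : orthogonalGroup n R) (a b : n) :
    ((coordReflection k * O : orthogonalGroup n R) : Matrix n n R) a b =
      (Pi.mulSingle k (-1) : n → R) a * (O : Matrix n n R) a b :=
  diagonal_mul _ _ _ _

lemma mul_coordReflection_apply (k : n) (O : orthogonalGroup n R) (a b : n) :
    ((O * coordReflection k : orthogonalGroup n R) : Matrix n n R) a b =
      (O : Matrix n n R) a b * (Pi.mulSingle k (-1) : n → R) b :=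
  mul_diagonal _ _ _ _

lemma mul_ofPerm_apply (σ : Equiv.Perm n) (O : orthogonalGroup n R) (a b : n) :
    ((O * ofPerm σ : orthogonalGroup n R) : Matrix n n R) a b = (O : Matrix n n R) a (σ.symm b) :=
  congrFun (congrFun (PEquiv.mul_toMatrix_toPEquiv _ _) a) b

lemma sum_apply_mul_self (O : orthogonalGroup n R) (a : n) :
    ∑ b, (O : Matrix n n R) a b * (O : Matrix n n R) a b = 1 := by
  simpa [mul_apply] using congrFun (congrFun ((mem_orthogonalGroup_iff n R).mp O.2) a) a

variable [MeasurableSpace (orthogonalGroup n ℝ)] [BorelSpace (orthogonalGroup n ℝ)]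
  (μ : Measure (orthogonalGroup n ℝ))

lemma integrable_apply_mul_apply [IsFiniteMeasure μ] (a b c d : n) :
    Integrable (fun O : orthogonalGroup n ℝ => (O : Matrix n n ℝ) a b * (O : Matrix n n ℝ) c d) μ :=
  ((continuous_subtype_val.matrix_elem a b).mul
    (continuous_subtype_val.matrix_elem c d)).integrable_of_hasCompactSupport
    (.of_compactSpace _)

lemma integral_apply_mul_apply_of_ne_left [μ.IsMulLeftInvariant] {i j : n} (p q : n)
    (hij : i ≠ j) :
    ∫ O : orthogonalGroup n ℝ, (O : Matrix n n ℝ) i p * (O : Matrix n n ℝ) j q ∂μ = 0 :=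
  integral_eq_zero_of_mul_left_eq_neg (g := coordReflection i) fun O => by
    rw [coordReflection_mul_apply, coordReflection_mul_apply, Pi.mulSingle_eq_same,
      Pi.mulSingle_eq_of_ne hij.symm]
    ring

lemma integral_apply_mul_apply_of_ne_right [μ.IsMulRightInvariant] (i j : n) {p q : n}
    (hpq : p ≠ q) :
    ∫ O : orthogonalGroup n ℝ, (O : Matrix n n ℝ) i p * (O : Matrix n n ℝ) j q ∂μ = 0 :=
  integral_eq_zero_of_mul_right_eq_neg (g := coordReflection p) fun O => by
    rw [mul_coordReflection_apply, mul_coordReflection_apply, Pi.mulSingle_eq_same,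
      Pi.mulSingle_eq_of_ne hpq.symm]
    ring

lemma integral_apply_mul_self_eq [μ.IsMulRightInvariant] (i p r : n) :
    ∫ O : orthogonalGroup n ℝ, (O : Matrix n n ℝ) i p * (O : Matrix n n ℝ) i p ∂μ =
      ∫ O : orthogonalGroup n ℝ, (O : Matrix n n ℝ) i r * (O : Matrix n n ℝ) i r ∂μ := by
  rw [← integral_mul_right_eq_self _ (ofPerm (Equiv.swap p r))]
  simp only [mul_ofPerm_apply, Equiv.symm_swap, Equiv.swap_apply_left]

lemma integral_apply_mul_self [μ.IsMulRightInvariant] [IsProbabilityMeasure μ] (i p : n) :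
    ∫ O : orthogonalGroup n ℝ, (O : Matrix n n ℝ) i p * (O : Matrix n n ℝ) i p ∂μ =
      (Fintype.card n : ℝ)⁻¹ := by
  have hsum : ∑ r, ∫ O : orthogonalGroup n ℝ, (O : Matrix n n ℝ) i r * (O : Matrix n n ℝ) i r ∂μ
      = 1 := by
    rw [← integral_finsetSum _ fun r _ => integrable_apply_mul_apply μ i r i r]
    simp [sum_apply_mul_self]
  simp only [← integral_apply_mul_self_eq μ i p, Finset.sum_const, Finset.card_univ,
    nsmul_eq_mul] at hsum
  exact eq_inv_of_mul_eq_one_right hsum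

end orthogonalGroup

end Matrix

open Matrix.orthogonalGroup

theorem stmt_18_general
    (N : ℕ)
    [MeasurableSpace (Matrix.orthogonalGroup (Fin N) ℝ)]
    [BorelSpace (Matrix.orthogonalGroup (Fin N) ℝ)]
    (μ : Measure (Matrix.orthogonalGroup (Fin N) ℝ))
    [μ.IsHaarMeasure] [IsProbabilityMeasure μ]
    (i j p q : Fin N) :
    ∫ O : Matrix.orthogonalGroup (Fin N) ℝ,
        ((O : Matrix (Fin N) (Fin N) ℝ) i p * (O : Matrix (Fin N) (Fin N) ℝ) j q) ∂μ =
      (if i = j then 1 else 0) * (if p = q then 1 else 0) / N := by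
  have := Measure.IsHaarMeasure.isMulRightInvariant_of_isProbabilityMeasure μ
  rcases eq_or_ne i j with rfl | hij
  · rcases eq_or_ne p q with rfl | hpq
    · simp [integral_apply_mul_self]
    · simp [integral_apply_mul_apply_of_ne_right μ i i hpq, hpq]
  · simp [integral_apply_mul_apply_of_ne_left μ p q hij, hij]

/-- under normalized Haar measure on O(N), N > 1,
E[O_{ip} O_{jq}] = δ_{ij} δ_{pq} / N. -/
theorem stmt_18
    (N : ℕ) (hN : 1 < N)
    [MeasurableSpace (Matrix.orthogonalGroup (Fin N) ℝ)]
    [BorelSpace (Matrix.orthogonalGroup (Fin N) ℝ)]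
    (μ : Measure (Matrix.orthogonalGroup (Fin N) ℝ))
    [μ.IsHaarMeasure] [IsProbabilityMeasure μ]
    (i j p q : Fin N) :
    ∫ O : Matrix.orthogonalGroup (Fin N) ℝ,
        ((O : Matrix (Fin N) (Fin N) ℝ) i p * (O : Matrix (Fin N) (Fin N) ℝ) j q) ∂μ =
      (if i = j then 1 else 0) * (if p = q then 1 else 0) / N :=
  stmt_18_general N μ i j p q
end
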